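/- For every n ≥ 1 and every rational class function y ∈ C(S_n) ⊗ ℚ, the following identity holds in C(S_{n+1}) ⊗ ℚ: ε_{n+1} ∪ r_1(y) − r_1(ε_n ∪ y) = −τ_{n+1} ∪ r_1(ε_n ∪ y) + r_1(τ_n ∪ ε_n ∪ y). -/

import Mathlib

/-!
Let `X = Σ_{c < n} (c, n)` be the Jucys–Murphy element of `ℚ[S_{n+1}]` (letters `0, …, n`).
Splitting `S_{n+1}` into the cosets `ι(S_n)` and `(c, n) ι(S_n)`, and using
`deg ((c, n) ι σ) = deg σ + 1`, one gets `ε_{n+1} = ι ε_n − X ∪ ι ε_n` and `τ_{n+1} = ι τ_n + X`.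
Cupping with a class function commutes with conjugation, because `deg` is conjugation
invariant; `ι` respects `∪`, and `∪` is associative. Hence, with `z = ε_n ∪ y`, both sides of
the identity equal `-(1/n!) Σ_t t (X ∪ ι z) t⁻¹`.

Degrees are computed from `deg π + dim Fix π = n`, where `Fix π` is the space of
`π`-invariant functions `Fin n → ℚ`: a transposition changes `dim Fix` by at most one, and
`(a, π a) π` has smaller support and a larger `Fix` than `π`.
-/

noncomputable section

/-- `permDeg π` is the minimal number of transpositions whose product is `π`. -/
def permDeg {n : ℕ} (π : Equiv.Perm (Fin n)) : ℕ :=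
  sInf {d | ∃ l : List (Equiv.Perm (Fin n)),
    (∀ t ∈ l, t.IsSwap) ∧ l.prod = π ∧ l.length = d}

/-- The cup product on the group ring, extended bilinearly from
`σ ∪ π = σπ` if `deg σ + deg π = deg (σπ)` and `0` otherwise. -/
def cup {n : ℕ} (f g : MonoidAlgebra ℚ (Equiv.Perm (Fin n))) :
    MonoidAlgebra ℚ (Equiv.Perm (Fin n)) :=
  f.coeff.sum fun σ a => g.coeff.sum fun π b =>
    if permDeg σ + permDeg π = permDeg (σ * π)
    then MonoidAlgebra.single (σ * π) (a * b) else 0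

/-- `tau n` is the sum of all transpositions in `S_n`, as an element of `ℚ[S_n]`. -/
def tau (n : ℕ) : MonoidAlgebra ℚ (Equiv.Perm (Fin n)) :=
  letI := Classical.decPred (Equiv.Perm.IsSwap : Equiv.Perm (Fin n) → Prop)
  ∑ σ ∈ Finset.univ.filter (fun σ : Equiv.Perm (Fin n) => σ.IsSwap),
    MonoidAlgebra.single σ (1 : ℚ)

/-- `eps n` is the alternating element `Σ_π sgn(π) π` of `ℚ[S_n]`. -/
def eps (n : ℕ) : MonoidAlgebra ℚ (Equiv.Perm (Fin n)) :=
  ∑ π : Equiv.Perm (Fin n),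
    MonoidAlgebra.single π (((Equiv.Perm.sign π : ℤˣ) : ℤ) : ℚ)

/-- The standard inclusion `S_n ⊂ S_{n+1}` (permutations fixing the last letter). -/
def iotaPerm (n : ℕ) (π : Equiv.Perm (Fin n)) : Equiv.Perm (Fin (n + 1)) :=
  π.viaFintypeEmbedding Fin.castSuccEmb

/-- The induced map `ι : ℚ[S_n] → ℚ[S_{n+1}]`. -/
def iota (n : ℕ) (f : MonoidAlgebra ℚ (Equiv.Perm (Fin n))) :
    MonoidAlgebra ℚ (Equiv.Perm (Fin (n + 1))) :=
  MonoidAlgebra.ofCoeff (Finsupp.mapDomain (iotaPerm n) f.coeff)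

/-- `f ∈ ℚ[S_n]` is a class function if its coefficients are constant on
conjugacy classes. -/
def IsClassFun {n : ℕ} (f : MonoidAlgebra ℚ (Equiv.Perm (Fin n))) : Prop :=
  ∀ σ π : Equiv.Perm (Fin n), f.coeff (σ * π * σ⁻¹) = f.coeff π

/-- The map `r_1 : ℚ[S_n] → ℚ[S_{n+1}]`, `x ↦ (1/n!) Σ_{t ∈ S_{n+1}} t ι(x) t⁻¹`. -/
def r1 (n : ℕ) (x : MonoidAlgebra ℚ (Equiv.Perm (Fin n))) :
    MonoidAlgebra ℚ (Equiv.Perm (Fin (n + 1))) :=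
  (n.factorial : ℚ)⁻¹ • ∑ t : Equiv.Perm (Fin (n + 1)),
    MonoidAlgebra.single t 1 * iota n x * MonoidAlgebra.single t⁻¹ 1

open Equiv Equiv.Perm Module

section FixedFunctions

variable {α : Type*}

def fixedFunctions (π : Perm α) : Submodule ℚ (α → ℚ) where
  carrier := {x | ∀ i, x (π i) = x i}
  add_mem' ha hb i := by simp [ha i, hb i]
  zero_mem' _ := rfl
  smul_mem' c x hx i := by simp [hx i]

theorem mem_fixedFunctions {π : Perm α} {x : α → ℚ} :
    x ∈ fixedFunctions π ↔ ∀ i, x (π i) = x i := Iff.rfl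

theorem fixedFunctions_one : fixedFunctions (1 : Perm α) = ⊤ := by
  ext x; simp [mem_fixedFunctions]

theorem mem_fixedFunctions_swap [DecidableEq α] {a b : α} {x : α → ℚ} (h : x a = x b) :
    x ∈ fixedFunctions (swap a b) := by
  intro i
  rcases eq_or_ne i a with rfl | hia
  · rw [swap_apply_left, h]
  rcases eq_or_ne i b with rfl | hib
  · rw [swap_apply_right, h]
  · rw [swap_apply_of_ne_of_ne hia hib]

/-- The indicator of `b` is fixed by `ρ` but not by `swap a b * ρ`. -/
theorem fixedFunctions_swap_mul_lt [DecidableEq α] {ρ : Perm α} {a b : α} (hb : ρ b = b)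
    (hab : a ≠ b) :
    fixedFunctions (swap a b * ρ) < fixedFunctions ρ := by
  refine lt_of_le_of_ne (fun x hx => ?_) fun h => ?_
  · have hab' : x a = x b := by simpa [hb] using hx b
    intro i
    simpa [mem_fixedFunctions_swap hab' (ρ i)] using hx i
  · have hmem : Pi.single b (1 : ℚ) ∈ fixedFunctions ρ := fun i => by
      rcases eq_or_ne i b with rfl | hib
      · rw [hb]
      · rw [Pi.single_eq_of_ne hib, Pi.single_eq_of_ne (by rwa [ne_eq, ← hb, ρ.apply_eq_iff_eq])]
    rw [← h] at hmem
    simpa [hb, hab] using hmem b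

variable [Fintype α]

theorem finrank_fixedFunctions_one :
    finrank ℚ (fixedFunctions (1 : Perm α)) = Fintype.card α := by
  rw [fixedFunctions_one, finrank_top, finrank_fintype_fun_eq_card]

theorem card_le_finrank_fixedFunctions_swap_add_one [DecidableEq α] (a b : α) :
    Fintype.card α ≤ finrank ℚ (fixedFunctions (swap a b)) + 1 := by
  let φ : (α → ℚ) →ₗ[ℚ] ℚ := LinearMap.proj (R := ℚ) (φ := fun _ => ℚ) a - LinearMap.proj b
  have hker : LinearMap.ker φ ≤ fixedFunctions (swap a b) := fun x hx =>
    mem_fixedFunctions_swap (sub_eq_zero.mp hx)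
  have hrange : finrank ℚ (LinearMap.range φ) ≤ 1 := by
    simpa using Submodule.finrank_le (LinearMap.range φ)
  have := LinearMap.finrank_range_add_finrank_ker φ
  have := Submodule.finrank_mono hker
  rw [finrank_fintype_fun_eq_card] at *
  omega

theorem finrank_fixedFunctions_le_swap_mul [DecidableEq α] (a b : α) (ρ : Perm α) :
    finrank ℚ (fixedFunctions ρ) ≤ finrank ℚ (fixedFunctions (swap a b * ρ)) + 1 := by
  have hinf : fixedFunctions (swap a b) ⊓ fixedFunctions ρ ≤ fixedFunctions (swap a b * ρ) :=
    fun x ⟨hs, hρ⟩ i => by rw [mul_apply, hs, hρ]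
  have := Submodule.finrank_sup_add_finrank_inf_eq (fixedFunctions (swap a b)) (fixedFunctions ρ)
  have := Submodule.finrank_mono hinf
  have := card_le_finrank_fixedFunctions_swap_add_one a b
  have := Submodule.finrank_le (fixedFunctions (swap a b) ⊔ fixedFunctions ρ)
  rw [finrank_fintype_fun_eq_card] at *
  omega

end FixedFunctions

section SwapFactorization

variable {α : Type*} [Fintype α] [DecidableEq α]

theorem isSwap_conj_iff {s π : Perm α} :
    (s * π * s⁻¹).IsSwap ↔ π.IsSwap := by
  rw [← card_support_eq_two, ← card_support_eq_two, card_support_conj]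

theorem card_le_length_add_finrank_fixedFunctions_prod {l : List (Perm α)}
    (hl : ∀ t ∈ l, t.IsSwap) :
    Fintype.card α ≤ l.length + finrank ℚ (fixedFunctions l.prod) := by
  induction l with
  | nil => rw [List.prod_nil, finrank_fixedFunctions_one]; exact Nat.le_add_left _ _
  | cons t l ih =>
    obtain ⟨a, b, -, rfl⟩ := hl t List.mem_cons_self
    have := ih fun u hu => hl u (List.mem_cons_of_mem _ hu)
    have : finrank ℚ (fixedFunctions l.prod) ≤
        finrank ℚ (fixedFunctions (swap a b :: l).prod) + 1 := by
      rw [List.prod_cons]; exact finrank_fixedFunctions_le_swap_mul a b l.prod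
    rw [List.length_cons]
    omega

theorem exists_swap_list_prod_eq (π : Perm α) :
    ∃ l : List (Perm α), (∀ t ∈ l, t.IsSwap) ∧ l.prod = π ∧
      l.length + finrank ℚ (fixedFunctions π) ≤ Fintype.card α := by
  induction h : π.support.card using Nat.strong_induction_on generalizing π with
  | _ k ih =>
  by_cases hπ : π = 1
  · refine ⟨[], by simp, hπ.symm, ?_⟩
    rw [hπ, finrank_fixedFunctions_one, List.length_nil, zero_add]
  obtain ⟨a, ha⟩ : ∃ a, π a ≠ a := by
    by_contra! h'
    exact hπ (Equiv.ext h')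
  obtain ⟨l, hl, hprod, hlen⟩ := ih _ (h ▸ card_support_swap_mul ha) (swap a (π a) * π) rfl
  have hlt : fixedFunctions π < fixedFunctions (swap a (π a) * π) := by
    have := fixedFunctions_swap_mul_lt (ρ := swap a (π a) * π) (by simp) ha
    rwa [swap_comm, swap_mul_self_mul] at this
  have := Submodule.finrank_lt_finrank_of_lt hlt
  refine ⟨swap a (π a) :: l, ?_, by simp [hprod], by simp only [List.length_cons]; omega⟩
  intro t ht
  rcases List.mem_cons.mp ht with rfl | ht
  exacts [⟨a, π a, ha.symm, rfl⟩, hl t ht]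

end SwapFactorization

section PermDeg

variable {N : ℕ}

theorem exists_swap_list_length_eq_permDeg (π : Perm (Fin N)) :
    ∃ l : List (Perm (Fin N)), (∀ t ∈ l, t.IsSwap) ∧ l.prod = π ∧ l.length = permDeg π := by
  obtain ⟨l, hl, hprod, -⟩ := exists_swap_list_prod_eq π
  exact Nat.sInf_mem (s := {d | ∃ l : List (Perm (Fin N)),
    (∀ t ∈ l, t.IsSwap) ∧ l.prod = π ∧ l.length = d}) ⟨l.length, l, hl, hprod, rfl⟩

theorem permDeg_le_length {π : Perm (Fin N)} {l : List (Perm (Fin N))}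
    (hl : ∀ t ∈ l, t.IsSwap) (hprod : l.prod = π) : permDeg π ≤ l.length :=
  Nat.sInf_le ⟨l, hl, hprod, rfl⟩

theorem permDeg_add_finrank_fixedFunctions (π : Perm (Fin N)) :
    permDeg π + finrank ℚ (fixedFunctions π) = N := by
  obtain ⟨l, hl, hprod, hlen⟩ := exists_swap_list_prod_eq π
  obtain ⟨l', hl', hprod', hlen'⟩ := exists_swap_list_length_eq_permDeg π
  have := permDeg_le_length hl hprod
  have := card_le_length_add_finrank_fixedFunctions_prod hl'
  rw [hprod', hlen', Fintype.card_fin] at this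
  rw [Fintype.card_fin] at hlen
  omega

theorem permDeg_one : permDeg (1 : Perm (Fin N)) = 0 :=
  Nat.le_zero.mp (permDeg_le_length (l := []) (by simp) rfl)

theorem permDeg_mul_le (σ π : Perm (Fin N)) : permDeg (σ * π) ≤ permDeg σ + permDeg π := by
  obtain ⟨l₁, hl₁, hprod₁, hlen₁⟩ := exists_swap_list_length_eq_permDeg σ
  obtain ⟨l₂, hl₂, hprod₂, hlen₂⟩ := exists_swap_list_length_eq_permDeg π
  have hl : ∀ t ∈ l₁ ++ l₂, t.IsSwap := fun t ht =>
    (List.mem_append.mp ht).elim (hl₁ t) (hl₂ t)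
  simpa [hlen₁, hlen₂] using permDeg_le_length hl (by rw [List.prod_append, hprod₁, hprod₂])

theorem permDeg_map_le {M : ℕ} (f : Perm (Fin N) →* Perm (Fin M))
    (hf : ∀ t, t.IsSwap → (f t).IsSwap) (π : Perm (Fin N)) : permDeg (f π) ≤ permDeg π := by
  obtain ⟨l, hl, hprod, hlen⟩ := exists_swap_list_length_eq_permDeg π
  rw [← hlen, ← List.length_map f]
  refine permDeg_le_length (by simpa using fun t ht => hf t (hl t ht)) ?_
  rw [List.prod_hom, hprod]

theorem permDeg_conj (s π : Perm (Fin N)) : permDeg (s * π * s⁻¹) = permDeg π := by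
  have key : ∀ s π : Perm (Fin N), permDeg (s * π * s⁻¹) ≤ permDeg π := fun s =>
    permDeg_map_le (MulAut.conj s).toMonoidHom fun _ => isSwap_conj_iff.mpr
  refine (key s π).antisymm ?_
  simpa [mul_assoc] using key s⁻¹ (s * π * s⁻¹)

theorem permDeg_swap_mul_of_apply_eq {ρ : Perm (Fin N)} {a b : Fin N} (hb : ρ b = b)
    (hab : a ≠ b) : permDeg (swap a b * ρ) = permDeg ρ + 1 := by
  have hswap : permDeg (swap a b) ≤ 1 :=
    permDeg_le_length (l := [swap a b])
      (by simp only [List.mem_singleton, forall_eq]; exact ⟨a, b, hab, rfl⟩) (by simp)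
  have := permDeg_mul_le (swap a b) ρ
  have := Submodule.finrank_lt_finrank_of_lt (fixedFunctions_swap_mul_lt hb hab)
  have := permDeg_add_finrank_fixedFunctions ρ
  have := permDeg_add_finrank_fixedFunctions (swap a b * ρ)
  omega

theorem permDeg_swap {a b : Fin N} (hab : a ≠ b) : permDeg (swap a b) = 1 := by
  simpa [permDeg_one] using permDeg_swap_mul_of_apply_eq (ρ := 1) (one_apply b) hab

theorem permDeg_eq_zero_iff {π : Perm (Fin N)} : permDeg π = 0 ↔ π = 1 := by
  refine ⟨fun h => ?_, fun h => h ▸ permDeg_one⟩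
  obtain ⟨l, -, hprod, hlen⟩ := exists_swap_list_length_eq_permDeg π
  rw [h, List.length_eq_zero_iff] at hlen
  simpa [hlen] using hprod.symm

theorem Equiv.Perm.IsSwap.permDeg_eq {t : Perm (Fin N)} (ht : t.IsSwap) : permDeg t = 1 := by
  obtain ⟨a, b, hab, rfl⟩ := ht
  exact permDeg_swap hab

end PermDeg

section Inclusion

variable {N : ℕ}

def iotaHom (N : ℕ) : Perm (Fin N) →* Perm (Fin (N + 1)) :=
  extendDomainHom Fin.castSuccEmb.toEquivRange

theorem iotaHom_apply (σ : Perm (Fin N)) : iotaHom N σ = iotaPerm N σ := rfl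

theorem iotaPerm_one : iotaPerm N 1 = 1 := map_one (iotaHom N)

theorem iotaPerm_castSucc (σ : Perm (Fin N)) (i : Fin N) :
    iotaPerm N σ i.castSucc = (σ i).castSucc :=
  σ.viaFintypeEmbedding_apply_image Fin.castSuccEmb i

theorem iotaPerm_last (σ : Perm (Fin N)) : iotaPerm N σ (Fin.last N) = Fin.last N :=
  σ.viaFintypeEmbedding_apply_notMem_range Fin.castSuccEmb (by simp)

theorem iotaPerm_injective : Function.Injective (iotaPerm N) :=
  extendDomainHom_injective _

theorem sign_iotaPerm (σ : Perm (Fin N)) : sign (iotaPerm N σ) = sign σ :=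
  viaFintypeEmbedding_sign σ Fin.castSuccEmb

theorem isSwap_iotaPerm_iff {σ : Perm (Fin N)} : (iotaPerm N σ).IsSwap ↔ σ.IsSwap := by
  rw [← card_support_eq_two, ← card_support_eq_two, iotaPerm, viaFintypeEmbedding,
    card_support_extend_domain]

theorem finrank_fixedFunctions_iotaPerm_le (σ : Perm (Fin N)) :
    finrank ℚ (fixedFunctions (iotaPerm N σ)) ≤ finrank ℚ (fixedFunctions σ) + 1 := by
  let V := fixedFunctions (iotaPerm N σ)
  let restrict : V →ₗ[ℚ] fixedFunctions σ :=
    (LinearMap.funLeft ℚ ℚ Fin.castSucc ∘ₗ V.subtype).codRestrict _ fun x i => by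
      simpa [iotaPerm_castSucc] using x.2 i.castSucc
  let L : V →ₗ[ℚ] fixedFunctions σ × ℚ := restrict.prod (LinearMap.proj (Fin.last N) ∘ₗ V.subtype)
  have hL : Function.Injective L := by
    intro x y hxy
    simp only [L, restrict, LinearMap.prod_apply, Prod.ext_iff, Subtype.ext_iff] at hxy
    ext i
    induction i using Fin.lastCases with
    | last => exact hxy.2
    | cast j => exact congrFun hxy.1 j
  simpa using LinearMap.finrank_le_finrank_of_injective hL

theorem permDeg_iotaPerm (σ : Perm (Fin N)) : permDeg (iotaPerm N σ) = permDeg σ := by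
  have := permDeg_map_le (iotaHom N) (fun _ => isSwap_iotaPerm_iff.mpr) σ
  have := finrank_fixedFunctions_iotaPerm_le σ
  have := permDeg_add_finrank_fixedFunctions σ
  have := permDeg_add_finrank_fixedFunctions (iotaPerm N σ)
  rw [iotaHom_apply] at *
  omega

theorem permDeg_swap_last_mul_iotaPerm (c : Fin N) (σ : Perm (Fin N)) :
    permDeg (swap c.castSucc (Fin.last N) * iotaPerm N σ) = permDeg σ + 1 := by
  rw [permDeg_swap_mul_of_apply_eq (iotaPerm_last σ) (Fin.castSucc_ne_last c), permDeg_iotaPerm]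

theorem isSwap_swap_last_mul_iotaPerm_iff (c : Fin N) (σ : Perm (Fin N)) :
    (swap c.castSucc (Fin.last N) * iotaPerm N σ).IsSwap ↔ σ = 1 := by
  refine ⟨fun h => ?_, fun h => ?_⟩
  · have := h.permDeg_eq
    rwa [permDeg_swap_last_mul_iotaPerm, add_eq_right, permDeg_eq_zero_iff] at this
  · rw [h, iotaPerm_one, mul_one]
    exact ⟨_, _, Fin.castSucc_ne_last c, rfl⟩

theorem bijective_swap_last_mul_iotaPerm :
    Function.Bijective fun p : Fin (N + 1) × Perm (Fin N) =>
      swap p.1 (Fin.last N) * iotaPerm N p.2 := by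
  refine (Fintype.bijective_iff_injective_and_card _).mpr
    ⟨?_, by simp [Fintype.card_perm, Nat.factorial_succ]⟩
  rintro ⟨k, σ⟩ ⟨k', σ'⟩ h
  have hk : k = k' := by
    simpa [iotaPerm_last] using congrArg (fun ρ : Perm (Fin (N + 1)) => ρ (Fin.last N)) h
  subst hk
  exact Prod.ext rfl (iotaPerm_injective (mul_left_cancel h))

theorem sum_perm_succ {M : Type*} [AddCommMonoid M] (f : Perm (Fin (N + 1)) → M) :
    ∑ ρ, f ρ = ∑ σ, f (iotaPerm N σ) +
      ∑ c : Fin N, ∑ σ, f (swap c.castSucc (Fin.last N) * iotaPerm N σ) := by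
  rw [← Fintype.sum_bijective _ bijective_swap_last_mul_iotaPerm _ _ fun _ => rfl,
    Fintype.sum_prod_type, Fin.sum_univ_castSucc, add_comm]
  simp only [swap_self]
  rfl

end Inclusion

local notation "𝔸[" N "]" => MonoidAlgebra ℚ (Perm (Fin N))

open MonoidAlgebra

section Cup

variable {N : ℕ}

def cupPerm (σ π : Perm (Fin N)) : 𝔸[N] :=
  if permDeg σ + permDeg π = permDeg (σ * π) then single (σ * π) 1 else 0

theorem cup_eq_sum (f g : 𝔸[N]) :
    cup f g = ∑ σ, ∑ π, (f.coeff σ * g.coeff π) • cupPerm σ π := by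
  rw [cup, Finsupp.sum_fintype _ _ fun _ => by simp]
  refine Finset.sum_congr rfl fun σ _ => ?_
  rw [Finsupp.sum_fintype _ _ fun _ => by simp]
  refine Finset.sum_congr rfl fun π _ => ?_
  unfold cupPerm
  split_ifs <;> simp

theorem cup_add_left (f f' g : 𝔸[N]) : cup (f + f') g = cup f g + cup f' g := by
  simp [cup_eq_sum, add_mul, add_smul, Finset.sum_add_distrib]

theorem cup_add_right (f g g' : 𝔸[N]) : cup f (g + g') = cup f g + cup f g' := by
  simp [cup_eq_sum, mul_add, add_smul, Finset.sum_add_distrib]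

theorem cup_smul_left (a : ℚ) (f g : 𝔸[N]) : cup (a • f) g = a • cup f g := by
  simp [cup_eq_sum, mul_assoc, mul_smul, Finset.smul_sum]

theorem cup_smul_right (a : ℚ) (f g : 𝔸[N]) : cup f (a • g) = a • cup f g := by
  simp [cup_eq_sum, mul_left_comm _ a, mul_smul, Finset.smul_sum]

variable (N) in
def cupBilin : 𝔸[N] →ₗ[ℚ] 𝔸[N] →ₗ[ℚ] 𝔸[N] :=
  LinearMap.mk₂ ℚ cup cup_add_left cup_smul_left cup_add_right cup_smul_right

theorem cupBilin_apply (f g : 𝔸[N]) : cupBilin N f g = cup f g := rfl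

theorem cup_zero_left (g : 𝔸[N]) : cup 0 g = 0 := (cupBilin N).map_zero₂ g

theorem cup_zero_right (f : 𝔸[N]) : cup f 0 = 0 := (cupBilin N f).map_zero

theorem cup_sub_left (f f' g : 𝔸[N]) : cup (f - f') g = cup f g - cup f' g :=
  (cupBilin N).map_sub₂ f f' g

theorem cup_sum_left {ι : Type*} (s : Finset ι) (f : ι → 𝔸[N]) (g : 𝔸[N]) :
    cup (∑ i ∈ s, f i) g = ∑ i ∈ s, cup (f i) g := by
  simp only [← cupBilin_apply, map_sum, LinearMap.sum_apply]

theorem cup_sum_right {ι : Type*} (f : 𝔸[N]) (s : Finset ι) (g : ι → 𝔸[N]) :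
    cup f (∑ i ∈ s, g i) = ∑ i ∈ s, cup f (g i) :=
  map_sum (cupBilin N f) g s

theorem cup_single_single (σ π : Perm (Fin N)) (a b : ℚ) :
    cup (single σ a) (single π b) = (a * b) • cupPerm σ π := by
  classical
  rw [cup_eq_sum, Finset.sum_eq_single σ (by simp_all) (by simp),
    Finset.sum_eq_single π (by simp_all) (by simp)]
  simp

theorem cup_assoc (f g h : 𝔸[N]) : cup (cup f g) h = cup f (cup g h) := by
  induction f using MonoidAlgebra.induction_linear with
  | zero => simp only [cup_zero_left]
  | add f f' hf hf' => simp only [cup_add_left, hf, hf']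
  | single σ a =>
  induction g using MonoidAlgebra.induction_linear with
  | zero => simp only [cup_zero_left, cup_zero_right]
  | add g g' hg hg' => simp only [cup_add_left, cup_add_right, hg, hg']
  | single π b =>
  induction h using MonoidAlgebra.induction_linear with
  | zero => simp only [cup_zero_right]
  | add h h' hh hh' => simp only [cup_add_right, hh, hh']
  | single ρ c =>
  have := permDeg_mul_le σ π
  have := permDeg_mul_le π ρ
  have := permDeg_mul_le (σ * π) ρ
  have : permDeg (σ * π * ρ) ≤ permDeg σ + permDeg (π * ρ) := by
    simpa only [mul_assoc] using permDeg_mul_le σ (π * ρ)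
  -- both sides are `(a * b * c) • σπρ` if `deg σ + deg π + deg ρ = deg (σπρ)`, and `0` otherwise
  simp only [cup_single_single, cup_smul_left, cup_smul_right, cupPerm]
  split_ifs <;> simp only [cup_single_single, cupPerm, cup_zero_left, cup_zero_right, ← mul_assoc,
    smul_zero, smul_smul] <;> split_ifs <;> first | omega | simp only [smul_zero] | ring_nf

end Cup

section Conj

variable {N : ℕ}

def conjL (t : Perm (Fin N)) : 𝔸[N] →ₗ[ℚ] 𝔸[N] :=
  LinearMap.mulRight ℚ (single t⁻¹ 1) ∘ₗ LinearMap.mulLeft ℚ (single t 1)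

theorem conjL_apply (t : Perm (Fin N)) (x : 𝔸[N]) :
    conjL t x = single t 1 * x * single t⁻¹ 1 := rfl

theorem conjL_single (t π : Perm (Fin N)) (b : ℚ) :
    conjL t (single π b) = single (t * π * t⁻¹) b := by
  simp [conjL_apply]

theorem cupPerm_conj (t σ π : Perm (Fin N)) :
    cupPerm (t * σ * t⁻¹) (t * π * t⁻¹) = conjL t (cupPerm σ π) := by
  have : t * σ * t⁻¹ * (t * π * t⁻¹) = t * (σ * π) * t⁻¹ := by group
  unfold cupPerm
  rw [this, permDeg_conj, permDeg_conj, permDeg_conj]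
  split_ifs
  exacts [(conjL_single ..).symm, (map_zero _).symm]

theorem conjL_cup (t : Perm (Fin N)) (f g : 𝔸[N]) :
    conjL t (cup f g) = cup (conjL t f) (conjL t g) := by
  induction f using MonoidAlgebra.induction_linear with
  | zero => simp only [cup_zero_left, map_zero]
  | add f f' hf hf' => simp only [cup_add_left, map_add, hf, hf']
  | single σ a =>
  induction g using MonoidAlgebra.induction_linear with
  | zero => simp only [cup_zero_right, map_zero]
  | add g g' hg hg' => simp only [cup_add_right, map_add, hg, hg']
  | single π b => rw [cup_single_single, conjL_single, conjL_single, cup_single_single,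
      map_smul, cupPerm_conj]

theorem sum_single_coeff (f : 𝔸[N]) : ∑ σ, single σ (f.coeff σ) = f := by
  conv_rhs => rw [← sum_coeff_single f]
  exact (Finsupp.sum_fintype _ _ fun _ => single_zero _).symm

theorem coeff_sum_single (c : Perm (Fin N) → ℚ) (π : Perm (Fin N)) :
    (∑ σ, single σ (c σ)).coeff π = c π := by
  classical
  rw [coeff_sum, Finsupp.finsetSum_apply]
  simp [coeff_single, Finsupp.single_apply]

theorem IsClassFun.conjL_eq {c : 𝔸[N]} (hc : IsClassFun c) (t : Perm (Fin N)) :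
    conjL t c = c := by
  calc conjL t c = ∑ σ, single (t * σ * t⁻¹) (c.coeff σ) := by
        conv_lhs => rw [← sum_single_coeff c]
        simp only [map_sum, conjL_single]
    _ = c := by
        conv_rhs => rw [← sum_single_coeff c]
        exact Fintype.sum_bijective _ (MulAut.conj t).bijective _ _ fun σ => by
          rw [MulAut.conj_apply, hc]

theorem IsClassFun.cup_conjL {c : 𝔸[N]} (hc : IsClassFun c) (t : Perm (Fin N)) (x : 𝔸[N]) :
    cup c (conjL t x) = conjL t (cup c x) := by
  rw [conjL_cup, hc.conjL_eq]

variable (N) in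
def conjSum : 𝔸[N] →ₗ[ℚ] 𝔸[N] := ∑ t, conjL t

theorem IsClassFun.cup_conjSum {c : 𝔸[N]} (hc : IsClassFun c) (x : 𝔸[N]) :
    cup c (conjSum N x) = conjSum N (cup c x) := by
  simp [conjSum, LinearMap.sum_apply, cup_sum_right, hc.cup_conjL]

theorem r1_eq_smul_conjSum (n : ℕ) (x : 𝔸[n]) :
    r1 n x = (n.factorial : ℚ)⁻¹ • conjSum (n + 1) (iota n x) := by
  simp [r1, conjSum, LinearMap.sum_apply, conjL_apply]

end Conj

section InclusionCup

variable {N : ℕ}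

theorem iota_eq (N : ℕ) : iota N = mapDomainLinearMap ℚ ℚ (iotaPerm N) := rfl

theorem iota_single (σ : Perm (Fin N)) (a : ℚ) :
    iota N (single σ a) = single (iotaPerm N σ) a := by
  simp [iota_eq]

theorem cupPerm_iotaPerm (σ π : Perm (Fin N)) :
    cupPerm (iotaPerm N σ) (iotaPerm N π) = iota N (cupPerm σ π) := by
  unfold cupPerm
  rw [← iotaHom_apply, ← iotaHom_apply, ← map_mul, iotaHom_apply, iotaHom_apply, iotaHom_apply,
    permDeg_iotaPerm, permDeg_iotaPerm, permDeg_iotaPerm]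
  split_ifs
  exacts [(iota_single ..).symm, by simp [iota_eq]]

theorem iota_cup (x y : 𝔸[N]) : iota N (cup x y) = cup (iota N x) (iota N y) := by
  induction x using MonoidAlgebra.induction_linear with
  | zero => simp only [cup_zero_left, iota_eq, map_zero]
  | add x x' hx hx' => simp only [cup_add_left, iota_eq, map_add] at *; rw [hx, hx']
  | single σ a =>
  induction y using MonoidAlgebra.induction_linear with
  | zero => simp only [cup_zero_right, iota_eq, map_zero]
  | add y y' hy hy' => simp only [cup_add_right, iota_eq, map_add] at *; rw [hy, hy']
  | single π b =>
    rw [cup_single_single, iota_single, iota_single, cup_single_single, cupPerm_iotaPerm,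
      iota_eq, map_smul]

end InclusionCup

section Elements

variable {N : ℕ}

theorem eps_eq_sum : eps N = ∑ σ, single σ ((sign σ : ℤ) : ℚ) := rfl

open scoped Classical in
theorem tau_eq_sum : tau N = ∑ σ, single σ (if σ.IsSwap then (1 : ℚ) else 0) := by
  rw [tau, Finset.sum_filter]
  exact Finset.sum_congr rfl fun σ _ => by split_ifs <;> simp

theorem isClassFun_eps : IsClassFun (eps N) := fun s π => by
  rw [eps_eq_sum, coeff_sum_single, coeff_sum_single, map_mul, map_mul, map_inv,
    mul_inv_cancel_comm]

theorem isClassFun_tau : IsClassFun (tau N) := fun s π => by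
  classical
  rw [tau_eq_sum, coeff_sum_single, coeff_sum_single]
  simp [isSwap_conj_iff]

def jucysMurphy (N : ℕ) : 𝔸[N + 1] :=
  ∑ c : Fin N, single (swap c.castSucc (Fin.last N)) 1

theorem single_swap_last_cup_single_iotaPerm (c : Fin N) (σ : Perm (Fin N)) (a : ℚ) :
    cup (single (swap c.castSucc (Fin.last N)) 1) (single (iotaPerm N σ) a) =
      single (swap c.castSucc (Fin.last N) * iotaPerm N σ) a := by
  rw [cup_single_single, cupPerm, if_pos, smul_single, one_mul, smul_eq_mul, mul_one]
  rw [permDeg_swap (Fin.castSucc_ne_last c), permDeg_swap_last_mul_iotaPerm, permDeg_iotaPerm,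
    add_comm]

theorem eps_succ : eps (N + 1) = iota N (eps N) - cup (jucysMurphy N) (iota N (eps N)) := by
  rw [eps_eq_sum, sum_perm_succ, sub_eq_add_neg]
  congr 1
  · rw [iota_eq, eps_eq_sum, map_sum]
    simp [sign_iotaPerm]
  · simp only [jucysMurphy, eps_eq_sum, iota_eq, map_sum, mapDomainLinearMap_single,
      cup_sum_left, cup_sum_right, single_swap_last_cup_single_iotaPerm,
      ← Finset.sum_neg_distrib, ← MonoidAlgebra.single_neg]
    rw [Finset.sum_comm]
    refine Finset.sum_congr rfl fun σ _ => Finset.sum_congr rfl fun c _ => ?_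
    simp [sign_swap (Fin.castSucc_ne_last c), sign_iotaPerm]

theorem tau_succ : tau (N + 1) = iota N (tau N) + jucysMurphy N := by
  classical
  rw [tau_eq_sum, tau_eq_sum, sum_perm_succ]
  congr 1
  · simp [iota_eq, isSwap_iotaPerm_iff]
  · refine Finset.sum_congr rfl fun c _ => ?_
    rw [Finset.sum_eq_single_of_mem 1 (Finset.mem_univ _) fun σ _ hσ => by
      simp [isSwap_swap_last_mul_iotaPerm_iff, hσ]]
    rw [if_pos ((isSwap_swap_last_mul_iotaPerm_iff c 1).mpr rfl), iotaPerm_one, mul_one]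

end Elements

theorem eps_r1_commutator_general (n : ℕ)
    (y : MonoidAlgebra ℚ (Equiv.Perm (Fin n))) :
    cup (eps (n + 1)) (r1 n y) - r1 n (cup (eps n) y) =
      -cup (tau (n + 1)) (r1 n (cup (eps n) y)) +
        r1 n (cup (tau n) (cup (eps n) y)) := by
  set z := cup (eps n) y
  have hε : cup (eps (n + 1)) (iota n y) = iota n z - cup (jucysMurphy n) (iota n z) := by
    rw [eps_succ, cup_sub_left, cup_assoc, ← iota_cup]
  have hτ : cup (tau (n + 1)) (iota n z) =
      iota n (cup (tau n) z) + cup (jucysMurphy n) (iota n z) := by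
    rw [tau_succ, cup_add_left, ← iota_cup]
  simp only [r1_eq_smul_conjSum, cup_smul_right, isClassFun_eps.cup_conjSum,
    isClassFun_tau.cup_conjSum, hε, hτ, map_sub, map_add]
  module

/-- For every `n ≥ 1` and every rational class function `y` on `S_n`, in
`C(S_{n+1}) ⊗ ℚ` one has
`ε_{n+1} ∪ r_1(y) − r_1(ε_n ∪ y) = −τ_{n+1} ∪ r_1(ε_n ∪ y) + r_1(τ_n ∪ ε_n ∪ y)`. -/
theorem eps_r1_commutator (n : ℕ) (hn : 1 ≤ n)
    (y : MonoidAlgebra ℚ (Equiv.Perm (Fin n))) (hy : IsClassFun y) :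
    cup (eps (n + 1)) (r1 n y) - r1 n (cup (eps n) y) =
      -cup (tau (n + 1)) (r1 n (cup (eps n) y)) +
        r1 n (cup (tau n) (cup (eps n) y)) :=
  eps_r1_commutator_general n y
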